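/- Under the standard Gray code g(i) = i XOR (i >>> 1) on k bits, for any indices i, j with |i − j| = 2 (and both in range), the Hamming distance between g(i) and g(j) is exactly 2. -/
import Mathlib


lemma tb_succ' (a b i : ℕ) (hb : b ≤ 1) : (2*a+b).testBit (i+1) = a.testBit i := by
  rw [Nat.testBit_succ]
  congr 1
  omega

lemma tb_zero' (a b : ℕ) (hb : b ≤ 1) : (2*a+b).testBit 0 = decide (b = 1) := by
  rw [Nat.testBit_zero]
  have : (2*a+b) % 2 = b := by omega
  rw [this]

lemma xor_odd' (m : ℕ) : (2*m+1) ^^^ (2*m+2) = 2*(m ^^^ (m+1)) + 1 := by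
  apply Nat.eq_of_testBit_eq
  intro i
  cases i with
  | zero =>
    rw [Nat.testBit_xor, tb_zero' m 1 (by omega), tb_zero' (m^^^(m+1)) 1 (by omega)]
    have : 2*m+2 = 2*(m+1)+0 := by ring
    rw [this, tb_zero' (m+1) 0 (by omega)]
    decide
  | succ i =>
    rw [Nat.testBit_xor, tb_succ' m 1 i (by omega), tb_succ' (m^^^(m+1)) 1 i (by omega)]
    have : 2*m+2 = 2*(m+1)+0 := by ring
    rw [this, tb_succ' (m+1) 0 i (by omega), Nat.testBit_xor]

lemma xor_even' (m : ℕ) : (2*m) ^^^ (2*m+1) = 1 := by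
  apply Nat.eq_of_testBit_eq
  intro i
  have h1 : (1:ℕ) = 2^0 := rfl
  cases i with
  | zero =>
    have : 2*m = 2*m+0 := by ring
    rw [Nat.testBit_xor, this, tb_zero' m 0 (by omega), tb_zero' m 1 (by omega),
      h1, Nat.testBit_two_pow]
    decide
  | succ i =>
    have : 2*m = 2*m+0 := by ring
    rw [Nat.testBit_xor, this, tb_succ' m 0 i (by omega), tb_succ' m 1 i (by omega),
      h1, Nat.testBit_two_pow]
    simp

lemma lemA : ∀ n : ℕ, ∃ t, n ^^^ (n+1) = 2^(t+1) - 1 ∧ 2^t ≤ n+1 := by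
  intro n
  induction n using Nat.strong_induction_on with
  | _ n ih =>
    rcases Nat.even_or_odd n with ⟨m, hm⟩ | ⟨m, hm⟩
    · exact ⟨0, by rw [hm, show m+m = 2*m by ring, xor_even']; decide, by omega⟩
    · obtain ⟨t, ht, hle⟩ := ih m (by omega)
      refine ⟨t+1, ?_, ?_⟩
      · rw [hm, show 2*m+1+1 = 2*m+2 by ring, xor_odd', ht]
        have := Nat.one_le_two_pow (n := t+1)
        have : 2^(t+1+1) = 2*2^(t+1) := by ring
        omega
      · have : 2^(t+1) = 2*2^t := by ring
        omega

lemma d_eq' (i : ℕ) : i ^^^ (i+2) = 2 * ((i/2) ^^^ (i/2+1)) := by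
  obtain ⟨m, b, hb, hi⟩ : ∃ m b, b ≤ 1 ∧ i = 2*m+b := ⟨i/2, i%2, by omega, by omega⟩
  have hdiv : i/2 = m := by omega
  subst hi
  rw [hdiv]
  apply Nat.eq_of_testBit_eq
  intro n
  cases n with
  | zero =>
    rw [Nat.testBit_xor, tb_zero' m b hb, show 2*m+b+2 = 2*(m+1)+b by ring,
      tb_zero' (m+1) b hb, show 2*((m)^^^(m+1)) = 2*((m)^^^(m+1))+0 by ring,
      tb_zero' _ 0 (by omega)]
    simp
  | succ n =>
    rw [Nat.testBit_xor, tb_succ' m b n hb, show 2*m+b+2 = 2*(m+1)+b by ring,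
      tb_succ' (m+1) b n hb, show 2*((m)^^^(m+1)) = 2*((m)^^^(m+1))+0 by ring,
      tb_succ' _ 0 n (by omega), Nat.testBit_xor]

/-- The standard binary reflected Gray code on `k` bits: `g(i) = i XOR (i >>> 1)`. -/
def grayCode (k : ℕ) (i : ℕ) : BitVec k :=
  let v := BitVec.ofNat k i
  v ^^^ (v >>> 1)

/-- Hamming distance between two bit vectors: the number of positions in which
they differ. -/
def bvHammingDist {k : ℕ} (a b : BitVec k) : ℕ :=
  (Finset.univ.filter (fun j : Fin k => a.getLsbD j ≠ b.getLsbD j)).card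



lemma bvHammingDist_comm {k : ℕ} (a b : BitVec k) :
    bvHammingDist a b = bvHammingDist b a := by
  unfold bvHammingDist
  congr 1
  ext p
  simp only [Finset.mem_filter]
  tauto

lemma boolxor (a b c d : Bool) : ((a ^^ b) ≠ (c ^^ d)) ↔ ((a ^^ c) ≠ (b ^^ d)) := by cases a <;> cases b <;> cases c <;> cases d <;> decide

lemma core (k i : ℕ) (h2 : i + 2 < 2^k) :
    bvHammingDist (grayCode k i) (grayCode k (i+2)) = 2 := by
  obtain ⟨t, ht, hle⟩ := lemA (i/2)
  have hpow : 2^(t+2) = 2*(2*2^t) := by ring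
  have hpow1 : 2^(t+1) = 2*2^t := by ring
  have hd : i ^^^ (i+2) = 2^(t+2) - 2 := by
    rw [d_eq', ht]; omega
  have htk : t + 2 ≤ k := by
    have h4 : 2^(t+2) ≤ 2*(i+2) := by omega
    by_contra hc
    have : 2^k ≤ 2^(t+1) := Nat.pow_le_pow_right (by omega) (by omega)
    omega
  have hdt : ∀ p, (i ^^^ (i+2)).testBit p = decide (1 ≤ p ∧ p ≤ t+1) := by
    intro p
    cases p with
    | zero =>
      rw [hd, Nat.testBit_zero]
      have hm : (2^(t+2)-2) % 2 = 0 := by omega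
      rw [hm]
      simp
    | succ p =>
      rw [hd, Nat.testBit_succ]
      have hm : (2^(t+2)-2) / 2 = 2^(t+1)-1 := by omega
      rw [hm, Nat.testBit_two_pow_sub_one]
      simp only [decide_eq_decide]
      omega
  have hcond : ∀ p : Fin k,
      ((grayCode k i).getLsbD p ≠ (grayCode k (i+2)).getLsbD p) ↔ (p.val = 0 ∨ p.val = t+1) := by
    intro p
    have hp : p.val < k := p.isLt
    have hstep : ∀ x : ℕ, x < 2^k →
        (decide (1 + p.val < k) && x.testBit (1 + p.val)) = x.testBit (1 + p.val) := by
      intro x hx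
      by_cases h : 1 + p.val < k
      · simp [h]
      · have hxk : x.testBit (1 + p.val) = false :=
          Nat.testBit_lt_two_pow (lt_of_lt_of_le hx (Nat.pow_le_pow_right (by omega) (by omega)))
        simp [h, hxk]
    simp only [grayCode, BitVec.getLsbD_xor, BitVec.getLsbD_ushiftRight, BitVec.getLsbD_ofNat,
      hp, decide_true, Bool.true_and, hstep i (by omega), hstep (i+2) h2]
    rw [boolxor, ← Nat.testBit_xor, ← Nat.testBit_xor, hdt, hdt, ne_eq, decide_eq_decide]
    omega
  have h0k : 0 < k := by omega
  have htk' : t + 1 < k := by omega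
  unfold bvHammingDist
  have hset : (Finset.univ.filter
      (fun p : Fin k => (grayCode k i).getLsbD p ≠ (grayCode k (i+2)).getLsbD p))
      = {(⟨0, h0k⟩ : Fin k), ⟨t+1, htk'⟩} := by
    ext p
    simp only [Finset.mem_filter, Finset.mem_univ, true_and, Finset.mem_insert,
      Finset.mem_singleton, hcond p, Fin.ext_iff]
  rw [hset, Finset.card_pair (by simp [Fin.ext_iff])]

/-- Gray-code words of indices at distance `2` differ in exactly two bit positions. -/
theorem grayCode_dist_two_hammingDist_two (k : ℕ) (i j : ℕ)
    (hi : i < 2 ^ k) (hj : j < 2 ^ k) (hij : |(i : ℤ) - (j : ℤ)| = 2) :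
    bvHammingDist (grayCode k i) (grayCode k j) = 2 := by
  have h := (abs_eq (by norm_num : (0:ℤ) ≤ 2)).mp hij
  have hcases : j = i + 2 ∨ i = j + 2 := by omega
  rcases hcases with h' | h'
  · subst h'; exact core k i hj
  · subst h'; rw [bvHammingDist_comm]; exact core k j hi
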